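/- arXiv:1103.2729 — 2 statements merged into one kernel-verified Lean document; each statement's English description precedes it below -/
import Mathlib

section
/- Let E and F be real inner product spaces, let r be a positive integer, and let φ : Fin r → E and ψ : Fin r → F be families of vectors. Let M be the Gram matrix of φ in E and let S be the r×r matrix with entries S_{ij} = ⟨φ_j, φ_i⟩_E + ⟨ψ_j, ψ_i⟩_F, and assume M is positive definite. Then for every x ∈ ℝ^r, (‖Σ_{j=1}^r x_j φ_j‖_E² + ‖Σ_{j=1}^r x_j ψ_j‖_F²)^{1/2} ≤ √(‖S‖₂ · ‖M⁻¹‖₂) · ‖Σ_{j=1}^r x_j φ_j‖_E. -/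
open scoped Matrix RealInnerProductSpace

/-- The spectral norm of a real `r × r` matrix: the operator norm of the matrix
acting on Euclidean space `ℝ^r` with the `ℓ²` norm. -/
noncomputable def matrixSpectralNorm {r : ℕ} (A : Matrix (Fin r) (Fin r) ℝ) : ℝ :=
  ‖Matrix.toEuclideanCLM (𝕜 := ℝ) A‖

/-- The Gram matrix of a family `φ : Fin r → E` in a real inner product space `E`:
the `r × r` real matrix with entries `M i j = ⟪φ j, φ i⟫`. -/
noncomputable def gramMatrix {E : Type*} [NormedAddCommGroup E] [InnerProductSpace ℝ E]
    {r : ℕ} (φ : Fin r → E) : Matrix (Fin r) (Fin r) ℝ :=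
  Matrix.of fun i j => ⟪φ j, φ i⟫

/-- The `H¹`-type Gram matrix of two families `φ : Fin r → E`, `ψ : Fin r → F`:
the `r × r` real matrix with entries `S i j = ⟪φ j, φ i⟫_E + ⟪ψ j, ψ i⟫_F`. -/
noncomputable def sobolevGramMatrix {E F : Type*}
    [NormedAddCommGroup E] [InnerProductSpace ℝ E]
    [NormedAddCommGroup F] [InnerProductSpace ℝ F]
    {r : ℕ} (φ : Fin r → E) (ψ : Fin r → F) : Matrix (Fin r) (Fin r) ℝ :=
  Matrix.of fun i j => ⟪φ j, φ i⟫ + ⟪ψ j, ψ i⟫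

/-!
Writing `v = ∑ xⱼ φⱼ` and `w = ∑ xⱼ ψⱼ`, the quadratic forms of the Gram matrices are
`x ⬝ Mx = ‖v‖²` and `x ⬝ Sx = ‖v‖² + ‖w‖²`, so `‖v‖² + ‖w‖² ≤ ‖S‖₂ |x|²`. It remains to see
`|x|² ≤ ‖M⁻¹‖₂ ‖v‖²`: with `z = M⁻¹x` and `u = ∑ zⱼ φⱼ` one has `|x|² = x ⬝ Mz = ⟪u, v⟫` and
`‖u‖² = z ⬝ Mz = x ⬝ M⁻¹x ≤ ‖M⁻¹‖₂ |x|²`, and Cauchy–Schwarz gives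
`|x|⁴ ≤ ‖u‖² ‖v‖² ≤ ‖M⁻¹‖₂ |x|² ‖v‖²`.
-/

open Matrix

lemma le_of_le_mul_of_sq_le {s p q c : ℝ} (hc : 0 ≤ c)
    (hs : s ≤ p * q) (hp : p ^ 2 ≤ c * s) : s ≤ c * q ^ 2 := by
  nlinarith [sq_nonneg p, sq_nonneg q, mul_nonneg hc (sq_nonneg q)]

lemma matrixSpectralNorm_nonneg {r : ℕ} (A : Matrix (Fin r) (Fin r) ℝ) :
    0 ≤ matrixSpectralNorm A :=
  norm_nonneg _

lemma dotProduct_mulVec_self_le_matrixSpectralNorm {r : ℕ} (A : Matrix (Fin r) (Fin r) ℝ)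
    (x : Fin r → ℝ) : x ⬝ᵥ (A *ᵥ x) ≤ matrixSpectralNorm A * (x ⬝ᵥ x) := by
  set v := WithLp.toLp 2 x
  have hv : ‖v‖ ^ 2 = x ⬝ᵥ x := by
    rw [← real_inner_self_eq_norm_sq, EuclideanSpace.inner_toLp_toLp, star_trivial]
  calc x ⬝ᵥ (A *ᵥ x) = ⟪v, toEuclideanCLM (𝕜 := ℝ) A v⟫ := (inner_toEuclideanCLM A v v).symm
    _ ≤ ‖v‖ * ‖toEuclideanCLM (𝕜 := ℝ) A v‖ := real_inner_le_norm _ _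
    _ ≤ ‖v‖ * (matrixSpectralNorm A * ‖v‖) :=
      mul_le_mul_of_nonneg_left ((toEuclideanCLM (𝕜 := ℝ) A).le_opNorm v) (norm_nonneg v)
    _ = matrixSpectralNorm A * (x ⬝ᵥ x) := by rw [← hv]; ring

section gramMatrix

variable {E : Type*} [NormedAddCommGroup E] [InnerProductSpace ℝ E] {r : ℕ}

lemma dotProduct_gramMatrix_mulVec (φ : Fin r → E) (x y : Fin r → ℝ) :
    x ⬝ᵥ (gramMatrix φ *ᵥ y) = ⟪∑ j, y j • φ j, ∑ i, x i • φ i⟫ := by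
  simp only [gramMatrix, dotProduct, mulVec, of_apply, sum_inner, inner_sum,
    real_inner_smul_left, real_inner_smul_right, Finset.mul_sum]
  exact Finset.sum_congr rfl fun i _ => Finset.sum_congr rfl fun j _ => by ring

lemma dotProduct_gramMatrix_mulVec_self (φ : Fin r → E) (x : Fin r → ℝ) :
    x ⬝ᵥ (gramMatrix φ *ᵥ x) = ‖∑ j, x j • φ j‖ ^ 2 := by
  rw [dotProduct_gramMatrix_mulVec, real_inner_self_eq_norm_sq]

lemma sobolevGramMatrix_eq_add {F : Type*} [NormedAddCommGroup F] [InnerProductSpace ℝ F]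
    (φ : Fin r → E) (ψ : Fin r → F) :
    sobolevGramMatrix φ ψ = gramMatrix φ + gramMatrix ψ := by
  ext i j
  simp only [sobolevGramMatrix, gramMatrix, of_apply, Matrix.add_apply]

lemma dotProduct_self_le_matrixSpectralNorm_gramMatrix_inv (φ : Fin r → E)
    (hφ : IsUnit (gramMatrix φ).det) (x : Fin r → ℝ) :
    x ⬝ᵥ x ≤ matrixSpectralNorm (gramMatrix φ)⁻¹ * ‖∑ j, x j • φ j‖ ^ 2 := by
  set z := (gramMatrix φ)⁻¹ *ᵥ x
  have hz : gramMatrix φ *ᵥ z = x := by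
    rw [mulVec_mulVec, mul_nonsing_inv _ hφ, one_mulVec]
  have hxx : x ⬝ᵥ x = ⟪∑ j, z j • φ j, ∑ i, x i • φ i⟫ := by
    rw [← dotProduct_gramMatrix_mulVec, hz]
  have hzz : ‖∑ j, z j • φ j‖ ^ 2 ≤ matrixSpectralNorm (gramMatrix φ)⁻¹ * (x ⬝ᵥ x) := by
    rw [← dotProduct_gramMatrix_mulVec_self, hz, dotProduct_comm]
    exact dotProduct_mulVec_self_le_matrixSpectralNorm _ x
  exact le_of_le_mul_of_sq_le (matrixSpectralNorm_nonneg _)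
    (hxx ▸ real_inner_le_norm _ _) hzz

end gramMatrix

theorem pod_inverse_estimate_H1_le_L2_general
    {E F : Type*} [NormedAddCommGroup E] [InnerProductSpace ℝ E]
    [NormedAddCommGroup F] [InnerProductSpace ℝ F]
    (r : ℕ) (φ : Fin r → E) (ψ : Fin r → F)
    (hMpos : (gramMatrix φ).PosDef) :
    ∀ x : Fin r → ℝ,
      Real.sqrt (‖∑ j, x j • φ j‖ ^ 2 + ‖∑ j, x j • ψ j‖ ^ 2) ≤
        Real.sqrt (matrixSpectralNorm (sobolevGramMatrix φ ψ) * matrixSpectralNorm (gramMatrix φ)⁻¹) *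
          ‖∑ j, x j • φ j‖ := by
  intro x
  have hS : x ⬝ᵥ (sobolevGramMatrix φ ψ *ᵥ x) = ‖∑ j, x j • φ j‖ ^ 2 + ‖∑ j, x j • ψ j‖ ^ 2 := by
    rw [sobolevGramMatrix_eq_add, add_mulVec, dotProduct_add,
      dotProduct_gramMatrix_mulVec_self, dotProduct_gramMatrix_mulVec_self]
  have hx := dotProduct_self_le_matrixSpectralNorm_gramMatrix_inv φ
    ((isUnit_iff_isUnit_det _).mp hMpos.isUnit) x
  have hSnorm := matrixSpectralNorm_nonneg (sobolevGramMatrix φ ψ)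
  calc Real.sqrt (‖∑ j, x j • φ j‖ ^ 2 + ‖∑ j, x j • ψ j‖ ^ 2)
      ≤ Real.sqrt (matrixSpectralNorm (sobolevGramMatrix φ ψ) * (x ⬝ᵥ x)) :=
        Real.sqrt_le_sqrt (hS ▸ dotProduct_mulVec_self_le_matrixSpectralNorm _ x)
    _ ≤ Real.sqrt (matrixSpectralNorm (sobolevGramMatrix φ ψ) *
          (matrixSpectralNorm (gramMatrix φ)⁻¹ * ‖∑ j, x j • φ j‖ ^ 2)) :=
        Real.sqrt_le_sqrt (mul_le_mul_of_nonneg_left hx hSnorm)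
    _ = _ := by
      rw [← mul_assoc, Real.sqrt_mul (mul_nonneg hSnorm (matrixSpectralNorm_nonneg _)),
        Real.sqrt_sq (norm_nonneg _)]

/-- POD inverse estimate: if `M` is the (positive definite) Gram matrix of `φ` in `E`
and `S` the matrix `S i j = ⟪φ j, φ i⟫ + ⟪ψ j, ψ i⟫`, then for every `x ∈ ℝ^r`,
`(‖∑ x j • φ j‖² + ‖∑ x j • ψ j‖²)^(1/2) ≤ √(‖S‖₂ ‖M⁻¹‖₂) ‖∑ x j • φ j‖`. -/
theorem pod_inverse_estimate_H1_le_L2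
    {E F : Type*} [NormedAddCommGroup E] [InnerProductSpace ℝ E]
    [NormedAddCommGroup F] [InnerProductSpace ℝ F]
    (r : ℕ) (hr : 0 < r) (φ : Fin r → E) (ψ : Fin r → F)
    (hMpos : (gramMatrix φ).PosDef) :
    ∀ x : Fin r → ℝ,
      Real.sqrt (‖∑ j, x j • φ j‖ ^ 2 + ‖∑ j, x j • ψ j‖ ^ 2) ≤
        Real.sqrt (matrixSpectralNorm (sobolevGramMatrix φ ψ) * matrixSpectralNorm (gramMatrix φ)⁻¹) *
          ‖∑ j, x j • φ j‖ :=
  pod_inverse_estimate_H1_le_L2_general r φ ψ hMpos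
end

section
/- Let X be a real inner product space, let N be a positive integer, and let u_1, …, u_N ∈ X be snapshots. Let K be the N×N snapshot correlation matrix with K_{ij} = (1/N)⟨u_j, u_i⟩_X, and let λ_1 ≥ λ_2 ≥ … ≥ λ_N ≥ 0 be the eigenvalues of K listed in decreasing order (with multiplicity). Then for every r with 0 ≤ r ≤ N and every orthonormal family ψ_1, …, ψ_r in X (i.e. ⟨ψ_i, ψ_j⟩_X = δ_{ij}), one has (1/N) Σ_{i=1}^N ‖u_i − Σ_{j=1}^r ⟨u_i, ψ_j⟩_X ψ_j‖_X² ≥ Σ_{j=r+1}^N λ_j. -/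
/-!
Let `b` be an orthonormal eigenbasis of `K`, with eigenvalues `μ`, and `w m = ∑ i, b m i • u i`.
Then the `w m` are orthogonal with `‖w m‖² = N μ m`, and `∑ m, ⟪w m, x⟫² = ∑ i, ⟪u i, x⟫²`
for every `x`. Hence the energy captured by `span ψ` is `N ∑ m, μ m t m`, where
`t m = ∑ j, ⟪w m, ψ j⟫² / ‖w m‖²` lies in `[0, 1]` and, by Bessel's inequality for the
normalised `w m`, `∑ m, t m ≤ r`. As the total energy is `N tr K = N ∑ m, μ m`, the average error
is `∑ m, μ m (1 - t m)`, and among weights `1 - t` with these constraints this is smallest when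
they sit on the `N - r` smallest eigenvalues.
-/

open scoped Matrix RealInnerProductSpace

open Finset Matrix

theorem Antitone.sum_tail_le_sum_mul_one_sub {N r : ℕ} (hr : r ≤ N) {lam t : Fin N → ℝ}
    (hlam : Antitone lam) (hlam0 : ∀ k, 0 ≤ lam k) (ht0 : ∀ k, 0 ≤ t k) (ht1 : ∀ k, t k ≤ 1)
    (ht : ∑ k, t k ≤ r) :
    ∑ k ∈ univ.filter (fun k : Fin N => r ≤ (k : ℕ)), lam k ≤ ∑ k, lam k * (1 - t k) := by
  obtain ⟨c, hc0, hhead, htail⟩ : ∃ c, 0 ≤ c ∧ (∀ k : Fin N, (k : ℕ) < r → c ≤ lam k) ∧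
      ∀ k : Fin N, r ≤ (k : ℕ) → lam k ≤ c := by
    rcases hr.lt_or_eq with hr | rfl
    · exact ⟨lam ⟨r, hr⟩, hlam0 _, fun k hk => hlam (Fin.mk_le_of_le_val hk.le),
        fun k hk => hlam (Fin.le_iff_val_le_val.mpr hk)⟩
    · exact ⟨0, le_rfl, fun k _ => hlam0 k, fun k hk => absurd k.isLt (by omega)⟩
  have hpoint : ∀ k : Fin N, c * ((if (k : ℕ) < r then 1 else 0) - t k) ≤
      lam k * (1 - t k) - if r ≤ (k : ℕ) then lam k else 0 := fun k => by
    by_cases hk : (k : ℕ) < r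
    · simp only [hk, if_true, not_le.mpr hk, if_false, sub_zero]
      exact mul_le_mul_of_nonneg_right (hhead k hk) (sub_nonneg.mpr (ht1 k))
    · simp only [hk, if_false, not_lt.mp hk, if_true]
      linarith [mul_le_mul_of_nonneg_right (htail k (not_lt.mp hk)) (ht0 k)]
  set tail := ∑ k ∈ univ.filter (fun k : Fin N => r ≤ (k : ℕ)), lam k
  calc tail ≤ tail + c * ((r : ℝ) - ∑ k, t k) :=
        le_add_of_nonneg_right (mul_nonneg hc0 (sub_nonneg.mpr ht))
    _ = tail + ∑ k : Fin N, c * ((if (k : ℕ) < r then 1 else 0) - t k) := by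
        rw [← mul_sum, sum_sub_distrib, sum_boole, Fin.card_filter_val_lt, min_eq_right hr]
    _ ≤ tail + ∑ k : Fin N, (lam k * (1 - t k) - if r ≤ (k : ℕ) then lam k else 0) :=
        add_le_add_right (sum_le_sum fun k _ => hpoint k) _
    _ = ∑ k, lam k * (1 - t k) := by rw [sum_sub_distrib, ← sum_filter, add_sub_cancel]

section

variable {X : Type*} [NormedAddCommGroup X] [InnerProductSpace ℝ X]

theorem Orthonormal.norm_sub_sum_inner_smul_sq {κ : Type*} [Fintype κ] {ψ : κ → X}
    (hψ : Orthonormal ℝ ψ) (x : X) :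
    ‖x - ∑ j, ⟪x, ψ j⟫ • ψ j‖ ^ 2 = ‖x‖ ^ 2 - ∑ j, ⟪x, ψ j⟫ ^ 2 := by
  have hcross : ⟪x, ∑ j, ⟪x, ψ j⟫ • ψ j⟫ = ∑ j, ⟪x, ψ j⟫ ^ 2 := by
    simp only [inner_sum, real_inner_smul_right, sq]
  have hproj : ‖∑ j, ⟪x, ψ j⟫ • ψ j‖ ^ 2 = ∑ j, ⟪x, ψ j⟫ ^ 2 := by
    rw [← real_inner_self_eq_norm_sq, inner_sum]
    simp only [real_inner_smul_right, hψ.inner_left_fintype, conj_trivial, sq]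
  rw [norm_sub_sq_real, hcross, hproj]
  ring

theorem Orthonormal.sum_inner_sq_le {κ : Type*} [Fintype κ] {ψ : κ → X}
    (hψ : Orthonormal ℝ ψ) (x : X) : ∑ j, ⟪ψ j, x⟫ ^ 2 ≤ ‖x‖ ^ 2 := by
  simpa only [Real.norm_eq_abs, sq_abs] using hψ.sum_inner_products_le x (s := univ)

/- Bessel's inequality for the normalised nonzero `w m`; the zero ones contribute `a / 0 = 0`. -/
theorem sum_inner_sq_div_norm_sq_le {ι : Type*} [Fintype ι] {w : ι → X}
    (hw : Pairwise fun m l => ⟪w m, w l⟫ = 0) (x : X) :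
    ∑ m, ⟪w m, x⟫ ^ 2 / ‖w m‖ ^ 2 ≤ ‖x‖ ^ 2 := by
  classical
  let v : {m // w m ≠ 0} → X := fun m => ‖w m‖⁻¹ • w m
  have hv : Orthonormal ℝ v := by
    refine ⟨fun m => norm_smul_inv_norm m.2, fun m l hml => ?_⟩
    simp only [v, real_inner_smul_left, real_inner_smul_right,
      hw (Subtype.val_injective.ne hml), mul_zero]
  calc ∑ m, ⟪w m, x⟫ ^ 2 / ‖w m‖ ^ 2
      = ∑ m : {m // w m ≠ 0}, ⟪v m, x⟫ ^ 2 := by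
        rw [← sum_filter_of_ne (p := fun m => w m ≠ 0) fun m _ h hm => h (by simp [hm]),
          sum_subtype _ (p := fun m => w m ≠ 0) (by simp)]
        refine sum_congr rfl fun m _ => ?_
        rw [real_inner_smul_left, mul_pow, inv_pow, div_eq_inv_mul]
    _ ≤ ‖x‖ ^ 2 := hv.sum_inner_sq_le x

noncomputable def captureFraction {ι κ : Type*} [Fintype κ] (w : ι → X) (ψ : κ → X) (m : ι) :
    ℝ :=
  (∑ j, ⟪w m, ψ j⟫ ^ 2) / ‖w m‖ ^ 2

section captureFraction

variable {ι κ : Type*} [Fintype κ] {w : ι → X} {ψ : κ → X}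

theorem captureFraction_nonneg (m : ι) : 0 ≤ captureFraction w ψ m := by
  unfold captureFraction; positivity

theorem captureFraction_le_one (hψ : Orthonormal ℝ ψ) (m : ι) : captureFraction w ψ m ≤ 1 := by
  refine div_le_one_of_le₀ ?_ (by positivity)
  simpa only [real_inner_comm] using hψ.sum_inner_sq_le (w m)

theorem norm_sq_mul_captureFraction (m : ι) :
    ‖w m‖ ^ 2 * captureFraction w ψ m = ∑ j, ⟪w m, ψ j⟫ ^ 2 := by
  by_cases hm : w m = 0
  · simp [hm]
  · exact mul_div_cancel₀ _ (by positivity)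

theorem sum_captureFraction_le [Fintype ι] (hw : Pairwise fun m l => ⟪w m, w l⟫ = 0)
    (hψ : Orthonormal ℝ ψ) : ∑ m, captureFraction w ψ m ≤ Fintype.card κ :=
  calc ∑ m, captureFraction w ψ m = ∑ j, ∑ m, ⟪w m, ψ j⟫ ^ 2 / ‖w m‖ ^ 2 := by
        simp only [captureFraction, sum_div]
        exact sum_comm
    _ ≤ ∑ j : κ, ‖ψ j‖ ^ 2 := sum_le_sum fun j _ => sum_inner_sq_div_norm_sq_le hw (ψ j)
    _ = Fintype.card κ := by simp [hψ.norm_eq_one]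

end captureFraction

section podMode

variable {ι : Type*} [Fintype ι]

/- With `b` an eigenbasis of the correlation matrix, these are the POD modes of the
snapshots `u`, normalised to `‖podMode b u m‖ ^ 2 = N λ_m` instead of `1`. -/
noncomputable def podMode (b : OrthonormalBasis ι ℝ (EuclideanSpace ℝ ι)) (u : ι → X) (m : ι) :
    X :=
  ∑ i, b m i • u i

theorem sum_inner_podMode_sq (b : OrthonormalBasis ι ℝ (EuclideanSpace ℝ ι)) (u : ι → X)
    (x : X) : ∑ m, ⟪podMode b u m, x⟫ ^ 2 = ∑ i, ⟪u i, x⟫ ^ 2 := by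
  let c : EuclideanSpace ℝ ι := WithLp.toLp 2 fun i => ⟪u i, x⟫
  have hc : ∀ m, ⟪podMode b u m, x⟫ = ⟪b m, c⟫ := fun m => by
    simp only [podMode, sum_inner, real_inner_smul_left, PiLp.inner_apply, c]
    simp [mul_comm]
  simp only [hc, b.sum_sq_inner_right, EuclideanSpace.real_norm_sq_eq, c]

variable [DecidableEq ι] {K : Matrix ι ι ℝ} (hK : K.IsHermitian) {u : ι → X} {c : ℝ}
include hK

theorem inner_podMode_eigenvectorBasis (hgram : gram ℝ u = c • K) (m l : ι) :
    ⟪podMode hK.eigenvectorBasis u m, podMode hK.eigenvectorBasis u l⟫ =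
      if m = l then c * hK.eigenvalues m else 0 := by
  set b := hK.eigenvectorBasis
  calc ⟪podMode b u m, podMode b u l⟫
      = star (b m : ι → ℝ) ⬝ᵥ gram ℝ u *ᵥ b l := (star_dotProduct_gram_mulVec u _ _).symm
    _ = c * hK.eigenvalues l * ⟪b m, b l⟫ := by
        rw [hgram, smul_mulVec, hK.mulVec_eigenvectorBasis, EuclideanSpace.inner_eq_star_dotProduct]
        simp [b, dotProduct_comm, mul_assoc]
    _ = if m = l then c * hK.eigenvalues m else 0 := by
        rw [orthonormal_iff_ite.mp b.orthonormal]
        split_ifs with h <;> simp [h]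

theorem sum_norm_sq_eq_mul_sum_eigenvalues (hgram : gram ℝ u = c • K) :
    ∑ i, ‖u i‖ ^ 2 = c * ∑ m, hK.eigenvalues m :=
  calc ∑ i, ‖u i‖ ^ 2 = trace (gram ℝ u) := by simp [trace]
    _ = c * ∑ m, hK.eigenvalues m := by
        rw [hgram, trace_smul, hK.trace_eq_sum_eigenvalues, smul_eq_mul]
        simp

theorem sum_norm_sub_sum_inner_smul_sq_eq (hgram : gram ℝ u = c • K) {κ : Type*} [Fintype κ]
    {ψ : κ → X} (hψ : Orthonormal ℝ ψ) :
    ∑ i, ‖u i - ∑ j, ⟪u i, ψ j⟫ • ψ j‖ ^ 2 =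
      c * ∑ m, hK.eigenvalues m *
        (1 - captureFraction (podMode hK.eigenvectorBasis u) ψ m) := by
  set w := podMode hK.eigenvectorBasis u
  have hnorm : ∀ m, ‖w m‖ ^ 2 = c * hK.eigenvalues m := fun m => by
    rw [← real_inner_self_eq_norm_sq, inner_podMode_eigenvectorBasis hK hgram, if_pos rfl]
  have hcaptured : ∑ i, ∑ j, ⟪u i, ψ j⟫ ^ 2 =
      c * ∑ m, hK.eigenvalues m * captureFraction w ψ m :=
    calc ∑ i, ∑ j, ⟪u i, ψ j⟫ ^ 2 = ∑ m, ∑ j, ⟪w m, ψ j⟫ ^ 2 := by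
          rw [sum_comm, sum_comm (f := fun m j => ⟪w m, ψ j⟫ ^ 2)]
          simp only [w, sum_inner_podMode_sq]
      _ = ∑ m, c * hK.eigenvalues m * captureFraction w ψ m := by
          simp only [← hnorm, norm_sq_mul_captureFraction]
      _ = c * ∑ m, hK.eigenvalues m * captureFraction w ψ m := by
          rw [mul_sum]; simp only [mul_assoc]
  rw [sum_congr rfl fun i _ => hψ.norm_sub_sum_inner_smul_sq (u i), sum_sub_distrib, hcaptured,
    sum_norm_sq_eq_mul_sum_eigenvalues hK hgram]
  simp only [mul_sub, mul_one, sum_sub_distrib]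

end podMode

end

/-- POD optimality: with snapshots `u i` in a real inner product space `X` and
correlation matrix `K i j = (1/N) ⟪u j, u i⟫` (which is Hermitian), let
`λ 0 ≥ λ 1 ≥ … ≥ λ (N-1) ≥ 0` be the eigenvalues of `K` listed in decreasing order
with multiplicity.  Then for every `r ≤ N` and every orthonormal family
`ψ : Fin r → X`, the average squared projection error of the snapshots onto
`span {ψ 0, …, ψ (r-1)}` is at least the tail eigenvalue sum `∑_{j ≥ r} λ j`. -/
theorem pod_optimality
    {X : Type*} [NormedAddCommGroup X] [InnerProductSpace ℝ X]
    (N : ℕ) (hN : 0 < N) (u : Fin N → X)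
    (K : Matrix (Fin N) (Fin N) ℝ)
    (hK : ∀ i j, K i j = (1 / (N : ℝ)) * ⟪u j, u i⟫)
    (hherm : K.IsHermitian)
    (lam : Fin N → ℝ)
    (hsorted : ∀ k l : Fin N, k ≤ l → lam l ≤ lam k)
    (hnonneg : ∀ k, 0 ≤ lam k)
    (heigen : ∃ σ : Equiv.Perm (Fin N), ∀ k, lam k = hherm.eigenvalues (σ k)) :
    ∀ r : ℕ, r ≤ N → ∀ ψ : Fin r → X,
      (∀ i j : Fin r, ⟪ψ i, ψ j⟫ = if i = j then (1 : ℝ) else 0) →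
      ∑ j ∈ Finset.univ.filter (fun j : Fin N => r ≤ (j : ℕ)), lam j ≤
        (1 / (N : ℝ)) * ∑ i : Fin N, ‖u i - ∑ j, ⟪u i, ψ j⟫ • ψ j‖ ^ 2 := by
  obtain ⟨σ, hσ⟩ := heigen
  intro r hr ψ hψ
  have hψon : Orthonormal ℝ ψ := orthonormal_iff_ite.mpr hψ
  have hN0 : (N : ℝ) ≠ 0 := by positivity
  have hgram : gram ℝ u = (N : ℝ) • K := by
    ext i j
    rw [gram_apply, Matrix.smul_apply, hK, real_inner_comm, smul_eq_mul]
    field_simp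
  set t := captureFraction (podMode hherm.eigenvectorBasis u) ψ
  have horth : Pairwise fun m l =>
      ⟪podMode hherm.eigenvectorBasis u m, podMode hherm.eigenvectorBasis u l⟫ = 0 :=
    fun m l hml => (inner_podMode_eigenvectorBasis hherm hgram m l).trans (if_neg hml)
  have ht : ∑ k, t (σ k) ≤ r := by
    simpa [Equiv.sum_comp] using sum_captureFraction_le horth hψon
  calc ∑ j ∈ univ.filter (fun j : Fin N => r ≤ (j : ℕ)), lam j
      ≤ ∑ k, lam k * (1 - t (σ k)) :=
        Antitone.sum_tail_le_sum_mul_one_sub hr hsorted hnonneg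
          (fun k => captureFraction_nonneg _) (fun k => captureFraction_le_one hψon _) ht
    _ = ∑ m, hherm.eigenvalues m * (1 - t m) := by
        simp only [hσ]
        exact Equiv.sum_comp σ fun m => hherm.eigenvalues m * (1 - t m)
    _ = (1 / (N : ℝ)) * ∑ i, ‖u i - ∑ j, ⟪u i, ψ j⟫ • ψ j‖ ^ 2 := by
        rw [sum_norm_sub_sum_inner_smul_sq_eq hherm hgram hψon, one_div, inv_mul_cancel_left₀ hN0]
end
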